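/- arXiv:2203.03318 — 2 statements merged into one kernel-verified Lean document; each statement's English description precedes it below -/
import Mathlib

section
/- For every n ≥ 0, e_n = ‖P_n^{[2]}‖_{[2]}² / ‖P_n‖_μ² = (‖P_{n+1}‖_μ²/‖P_n‖_μ²)·(K_{n+1}(c,c)/K_n(c,c)); in particular e_n > 0. -/
open MeasureTheory Polynomial

/-- Squared norm `‖Q‖_μ² = ∫ Q(x)² dμ`. -/
noncomputable def nrmSq (μ : Measure ℝ) (Q : Polynomial ℝ) : ℝ := ∫ x, Q.eval x ^ 2 ∂μ

/-- Squared norm in the 2-iterated Christoffel measure `(x-c)² dμ`. -/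
noncomputable def nrmSq2 (μ : Measure ℝ) (c : ℝ) (Q : Polynomial ℝ) : ℝ :=
  ∫ x, Q.eval x ^ 2 * (x - c) ^ 2 ∂μ

/-- Sobolev-type inner product `⟨f,g⟩_S = ∫ f g dμ + M f(c) g(c) + N f'(c) g'(c)`. -/
noncomputable def ipS (μ : Measure ℝ) (c M N : ℝ) (f g : Polynomial ℝ) : ℝ :=
  (∫ x, f.eval x * g.eval x ∂μ) + M * (f.eval c * g.eval c)
    + N * ((derivative f).eval c * (derivative g).eval c)

/-- Leading coefficient `r_n = 1/‖P_n‖_μ` of the orthonormal polynomial `p_n`. -/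
noncomputable def rC (μ : Measure ℝ) (P : ℕ → Polynomial ℝ) (n : ℕ) : ℝ :=
  1 / Real.sqrt (nrmSq μ (P n))

/-- Leading coefficient `r_n^{[2]} = 1/‖P_n^{[2]}‖_{[2]}`. -/
noncomputable def r2C (μ : Measure ℝ) (c : ℝ) (P2 : ℕ → Polynomial ℝ) (n : ℕ) : ℝ :=
  1 / Real.sqrt (nrmSq2 μ c (P2 n))

/-- Orthonormal polynomial `p_n = P_n/‖P_n‖_μ`. -/
noncomputable def onP (μ : Measure ℝ) (P : ℕ → Polynomial ℝ) (n : ℕ) : Polynomial ℝ :=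
  C (rC μ P n) * P n

/-- Orthonormal polynomial `p_n^{[2]} = P_n^{[2]}/‖P_n^{[2]}‖_{[2]}`. -/
noncomputable def onP2 (μ : Measure ℝ) (c : ℝ) (P2 : ℕ → Polynomial ℝ) (n : ℕ) : Polynomial ℝ :=
  C (r2C μ c P2 n) * P2 n

/-- Leading coefficient `t_n = 1/‖S_n^{M,N}‖_S` of the Sobolev-type orthonormal polynomial. -/
noncomputable def tC (μ : Measure ℝ) (c M N : ℝ) (S : ℕ → Polynomial ℝ) (n : ℕ) : ℝ :=
  1 / Real.sqrt (ipS μ c M N (S n) (S n))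

/-- Sobolev-type orthonormal polynomial `s_n^{M,N} = S_n^{M,N}/‖S_n^{M,N}‖_S`. -/
noncomputable def sN (μ : Measure ℝ) (c M N : ℝ) (S : ℕ → Polynomial ℝ) (n : ℕ) : Polynomial ℝ :=
  C (tC μ c M N S n) * S n

/-- Diagonal kernel value `K_n(c,c) = Σ_{j=0}^n P_j(c)²/‖P_j‖_μ²`. -/
noncomputable def Kcc (μ : Measure ℝ) (P : ℕ → Polynomial ℝ) (c : ℝ) (n : ℕ) : ℝ :=
  ∑ j ∈ Finset.range (n + 1), (P j).eval c ^ 2 / nrmSq μ (P j)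

/-- Kernel `K_n^{(0,j)}(x,c)` as a polynomial in `x`:
`Σ_{k=0}^n (d/dy)^j P_k(y)|_{y=c} · P_k(x)/‖P_k‖_μ²`. -/
noncomputable def Kpoly (μ : Measure ℝ) (P : ℕ → Polynomial ℝ) (c : ℝ) (n j : ℕ) : Polynomial ℝ :=
  ∑ k ∈ Finset.range (n + 1), C ((derivative^[j] (P k)).eval c / nrmSq μ (P k)) * P k

/-- Mixed derivative of the kernel at the diagonal:
`K_n^{(i,j)}(c,c) = Σ_{k=0}^n P_k^{(i)}(c) P_k^{(j)}(c)/‖P_k‖_μ²`. -/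
noncomputable def Kder (μ : Measure ℝ) (P : ℕ → Polynomial ℝ) (c : ℝ) (n i j : ℕ) : ℝ :=
  ∑ k ∈ Finset.range (n + 1),
    (derivative^[i] (P k)).eval c * (derivative^[j] (P k)).eval c / nrmSq μ (P k)

/-- Connection coefficient `d_n`. -/
noncomputable def dCoef (P : ℕ → Polynomial ℝ) (c : ℝ) (n : ℕ) : ℝ :=
  ((P (n + 2)).eval c * (derivative (P n)).eval c
      - (derivative (P (n + 2))).eval c * (P n).eval c) /
    ((P (n + 1)).eval c * (derivative (P n)).eval c
      - (derivative (P (n + 1))).eval c * (P n).eval c)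

/-- Connection coefficient `e_n`. -/
noncomputable def eCoef (P : ℕ → Polynomial ℝ) (c : ℝ) (n : ℕ) : ℝ :=
  ((P (n + 2)).eval c * (derivative (P (n + 1))).eval c
      - (derivative (P (n + 2))).eval c * (P (n + 1)).eval c) /
    ((P (n + 1)).eval c * (derivative (P n)).eval c
      - (derivative (P (n + 1))).eval c * (P n).eval c)

/-- Connection coefficient `γ_{j,n} = ⟨s_n^{M,N}, p_j^{[2]}⟩_{[2]}`. -/
noncomputable def gamC (μ : Measure ℝ) (c M N : ℝ) (S P2 : ℕ → Polynomial ℝ) (j n : ℕ) : ℝ :=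
  ∫ x, (sN μ c M N S n).eval x * (onP2 μ c P2 j).eval x * (x - c) ^ 2 ∂μ

/-- Jacobi matrix of `μ`: `J(n,m) = ∫ x p_n(x) p_m(x) dμ`. -/
noncomputable def Jmat (μ : Measure ℝ) (P : ℕ → Polynomial ℝ) (n m : ℕ) : ℝ :=
  ∫ x, x * ((onP μ P n).eval x * (onP μ P m).eval x) ∂μ

/-- Jacobi matrix of `(x-c)² dμ`: `J_{[2]}(n,m) = ∫ x p_n^{[2]}(x) p_m^{[2]}(x) (x-c)² dμ`. -/
noncomputable def J2mat (μ : Measure ℝ) (c : ℝ) (P2 : ℕ → Polynomial ℝ) (n m : ℕ) : ℝ :=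
  ∫ x, x * ((onP2 μ c P2 n).eval x * (onP2 μ c P2 m).eval x) * (x - c) ^ 2 ∂μ

/-- Five-diagonal matrix `H(n,m) = ⟨(x-c)² s_n^{M,N}, s_m^{M,N}⟩_S`. -/
noncomputable def Hmat (μ : Measure ℝ) (c M N : ℝ) (S : ℕ → Polynomial ℝ) (n m : ℕ) : ℝ :=
  ipS μ c M N ((X - C c) ^ 2 * sN μ c M N S n) (sN μ c M N S m)

/-- Kronecker delta. -/
noncomputable def kdel (n m : ℕ) : ℝ := if n = m then 1 else 0

noncomputable def ipw (μ : Measure ℝ) (w f g : Polynomial ℝ) : ℝ := ∫ x, (f * g * w).eval x ∂μ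

lemma integrable_polyEval (μ : Measure ℝ)
    (hmom : ∀ n : ℕ, Integrable (fun x : ℝ => x ^ n) μ) (q : Polynomial ℝ) :
    Integrable (fun x => q.eval x) μ := by
  have h : (fun x : ℝ => q.eval x)
      = fun x => ∑ i ∈ Finset.range (q.natDegree + 1), q.coeff i * x ^ i := by
    funext x; exact q.eval_eq_sum_range x
  rw [h]
  exact integrable_finset_sum _ (fun i _ => (hmom i).const_mul _)

lemma ipw_congr (μ : Measure ℝ) (w f g f' g' : Polynomial ℝ) (h : f * g = f' * g') :
    ipw μ w f g = ipw μ w f' g' := by unfold ipw; rw [h]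

lemma ipw_smul_left (μ : Measure ℝ) (w f g : Polynomial ℝ) (a : ℝ) :
    ipw μ w (C a * f) g = a * ipw μ w f g := by
  unfold ipw
  rw [show (C a * f) * g * w = C a * (f * g * w) by ring]
  simp_rw [eval_mul, eval_C]
  exact MeasureTheory.integral_const_mul a _

lemma ipw_sum_left (μ : Measure ℝ)
    (hmom : ∀ n : ℕ, Integrable (fun x : ℝ => x ^ n) μ)
    (w g : Polynomial ℝ) (s : Finset ℕ) (f : ℕ → Polynomial ℝ) :
    ipw μ w (∑ j ∈ s, f j) g = ∑ j ∈ s, ipw μ w (f j) g := by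
  unfold ipw
  rw [show (∑ j ∈ s, f j) * g * w = ∑ j ∈ s, (f j * g * w) by rw [Finset.sum_mul, Finset.sum_mul]]
  simp_rw [eval_finset_sum]
  exact integral_finset_sum s (fun j _ => integrable_polyEval μ hmom _)

lemma expandOPS (Q : ℕ → Polynomial ℝ) (hQm : ∀ n, (Q n).Monic) (hQd : ∀ n, (Q n).natDegree = n) :
    ∀ n (q : Polynomial ℝ), q.natDegree ≤ n →
      ∃ a : ℕ → ℝ, q = ∑ j ∈ Finset.range (n + 1), C (a j) * Q j := by
  intro n
  induction n with
  | zero =>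
    intro q hq
    refine ⟨fun _ => q.coeff 0, ?_⟩
    have h0 : Q 0 = 1 := (hQm 0).natDegree_eq_zero.mp (hQd 0)
    rw [Finset.sum_range_one, h0, mul_one]
    exact eq_C_of_natDegree_le_zero hq
  | succ n ih =>
    intro q hq
    set r := q - C (q.coeff (n + 1)) * Q (n + 1) with hr
    have hrd : r.natDegree ≤ n := by
      rw [natDegree_le_iff_coeff_eq_zero]
      intro m hm
      have hm1 : n + 1 ≤ m := hm
      rcases eq_or_lt_of_le hm1 with h | h
      · subst h
        have h1 : (Q (n+1)).coeff (n+1) = 1 := by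
          have := (hQm (n+1)).coeff_natDegree
          rwa [hQd] at this
        simp [hr, coeff_sub, coeff_C_mul, h1]
      · have h1 : q.coeff m = 0 := coeff_eq_zero_of_natDegree_lt (lt_of_le_of_lt hq h)
        have h2 : (Q (n+1)).coeff m = 0 := coeff_eq_zero_of_natDegree_lt (by rw [hQd]; exact h)
        simp [hr, coeff_sub, coeff_C_mul, h1, h2]
    obtain ⟨a, ha⟩ := ih r hrd
    refine ⟨Function.update a (n + 1) (q.coeff (n + 1)), ?_⟩
    rw [Finset.sum_range_succ, Function.update_self]
    have h3 : ∑ j ∈ Finset.range (n + 1),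
        C (Function.update a (n + 1) (q.coeff (n + 1)) j) * Q j
        = ∑ j ∈ Finset.range (n + 1), C (a j) * Q j :=
      Finset.sum_congr rfl
        (fun j hj => by rw [Function.update_of_ne (Finset.mem_range.mp hj).ne])
    rw [h3, ← ha, hr]
    ring

section OPS
variable (μ : Measure ℝ)
  (hmom : ∀ n : ℕ, Integrable (fun x : ℝ => x ^ n) μ)
  (w : Polynomial ℝ) (Q : ℕ → Polynomial ℝ)
  (hQm : ∀ n, (Q n).Monic) (hQd : ∀ n, (Q n).natDegree = n)
  (hQo : ∀ m n, m ≠ n → ipw μ w (Q m) (Q n) = 0)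

include hmom hQm hQd hQo

/-- Inner product against `Q m` of q whose coefficients vanish from `m` on is 0. -/
lemma ipw_ortho_coeff (q : Polynomial ℝ) (m : ℕ) (h : ∀ k, m ≤ k → q.coeff k = 0) :
    ipw μ w q (Q m) = 0 := by
  match m with
  | 0 =>
    have hq : q = 0 := by
      ext k; simpa using h k (Nat.zero_le k)
    subst hq
    unfold ipw
    simp
  | m + 1 =>
    have hd : q.natDegree ≤ m := natDegree_le_iff_coeff_eq_zero.mpr (fun k hk => h k hk)
    obtain ⟨a, ha⟩ := expandOPS Q hQm hQd m q hd
    rw [ha, ipw_sum_left μ hmom]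
    apply Finset.sum_eq_zero
    intro j hj
    rw [ipw_smul_left, hQo j (m+1) (by have := Finset.mem_range.mp hj; omega), mul_zero]

/-- Inner product of a monic polynomial of degree `m` against `Q m`. -/
lemma ipw_monic (q : Polynomial ℝ) (m : ℕ) (hq : q.Monic) (hd : q.natDegree = m) :
    ipw μ w q (Q m) = ipw μ w (Q m) (Q m) := by
  have key : ipw μ w (q - Q m) (Q m) = 0 := by
    apply ipw_ortho_coeff μ hmom w Q hQm hQd hQo
    intro k hk
    rcases eq_or_lt_of_le hk with h | h
    · have hkm : k = m := h.symm
      subst hkm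
      have h1 : q.coeff k = 1 := by rw [← hd]; exact hq.coeff_natDegree
      have h2 : (Q k).coeff k = 1 := by
        have := (hQm k).coeff_natDegree
        rwa [hQd] at this
      simp [coeff_sub, h1, h2]
    · have h1 : q.coeff k = 0 := coeff_eq_zero_of_natDegree_lt (hd ▸ h)
      have h2 : (Q m).coeff k = 0 := coeff_eq_zero_of_natDegree_lt (by rw [hQd]; exact h)
      simp [coeff_sub, h1, h2]
  have expand : ipw μ w (q - Q m) (Q m) = ipw μ w q (Q m) - ipw μ w (Q m) (Q m) := by
    unfold ipw
    rw [show (q - Q m) * Q m * w = q * Q m * w - Q m * Q m * w by ring]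
    simp_rw [eval_sub]
    exact integral_sub (integrable_polyEval μ hmom _) (integrable_polyEval μ hmom _)
  rw [expand] at key
  linarith

/-- Coefficient formula: for q of degree ≤ n there exist a with
q = Σ C(a j) Q j and a k * ‖Q k‖² = ⟨q, Q k⟩. -/
lemma expand_coeff (q : Polynomial ℝ) (n : ℕ) (hd : q.natDegree ≤ n) :
    ∃ a : ℕ → ℝ, q = ∑ j ∈ Finset.range (n + 1), C (a j) * Q j
      ∧ ∀ k, k ≤ n → a k * ipw μ w (Q k) (Q k) = ipw μ w q (Q k) := by
  obtain ⟨a, ha⟩ := expandOPS Q hQm hQd n q hd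
  refine ⟨a, ha, fun k hk => ?_⟩
  rw [ha, ipw_sum_left μ hmom]
  rw [Finset.sum_eq_single k]
  · rw [ipw_smul_left]
  · intro j hj hne
    rw [ipw_smul_left, hQo j k hne, mul_zero]
  · intro hk'
    exact absurd (Finset.mem_range.mpr (by omega)) hk'

end OPS

lemma ipw_congr' (μ : Measure ℝ) (w w' f g f' g' : Polynomial ℝ) (h : f * g * w = f' * g' * w') :
    ipw μ w f g = ipw μ w' f' g' := by unfold ipw; rw [h]

lemma ipw_sub_left (μ : Measure ℝ)
    (hmom : ∀ n : ℕ, Integrable (fun x : ℝ => x ^ n) μ) (w f g h : Polynomial ℝ) :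
    ipw μ w (f - g) h = ipw μ w f h - ipw μ w g h := by
  unfold ipw
  rw [show (f - g) * h * w = f * h * w - g * h * w by ring]
  simp_rw [eval_sub]
  exact integral_sub (integrable_polyEval μ hmom _) (integrable_polyEval μ hmom _)

lemma monic_sub_natDegree_le (f g : Polynomial ℝ) (d : ℕ) (hf : f.Monic) (hg : g.Monic)
    (hfd : f.natDegree = d + 1) (hgd : g.natDegree = d + 1) : (f - g).natDegree ≤ d := by
  rw [natDegree_le_iff_coeff_eq_zero]
  intro m hm
  rcases eq_or_lt_of_le (by omega : d + 1 ≤ m) with h | h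
  · have h1 : f.coeff m = 1 := by rw [← h, ← hfd]; exact hf.coeff_natDegree
    have h2 : g.coeff m = 1 := by rw [← h, ← hgd]; exact hg.coeff_natDegree
    simp [coeff_sub, h1, h2]
  · have h1 : f.coeff m = 0 := coeff_eq_zero_of_natDegree_lt (hfd ▸ h)
    have h2 : g.coeff m = 0 := coeff_eq_zero_of_natDegree_lt (hgd ▸ h)
    simp [coeff_sub, h1, h2]

lemma ipw_one_self (μ : Measure ℝ) (q : Polynomial ℝ) : ipw μ 1 q q = nrmSq μ q := by
  unfold ipw nrmSq
  apply integral_congr_ae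
  filter_upwards with x
  simp [eval_mul]
  ring

lemma ipw_w2_self (μ : Measure ℝ) (c : ℝ) (q : Polynomial ℝ) :
    ipw μ ((X - C c) ^ 2) q q = nrmSq2 μ c q := by
  unfold ipw nrmSq2
  apply integral_congr_ae
  filter_upwards with x
  simp only [eval_mul, eval_pow, eval_sub, eval_X, eval_C]
  ring

/-- Three-term recurrence. -/
lemma threeTerm (μ : Measure ℝ)
    (hmom : ∀ n : ℕ, Integrable (fun x : ℝ => x ^ n) μ)
    (P : ℕ → Polynomial ℝ) (hPm : ∀ n, (P n).Monic) (hPd : ∀ n, (P n).natDegree = n)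
    (hPo1 : ∀ m n, m ≠ n → ipw μ 1 (P m) (P n) = 0)
    (hNpos : ∀ n, 0 < nrmSq μ (P n)) (n : ℕ) :
    ∃ b : ℝ, P (n + 2) = (X - C b) * P (n + 1)
      - C (nrmSq μ (P (n + 1)) / nrmSq μ (P n)) * P n := by
  set q : Polynomial ℝ := X * P (n + 1) - P (n + 2) with hq
  have hqd : q.natDegree ≤ n + 1 := by
    apply monic_sub_natDegree_le _ _ (n + 1) (monic_X.mul (hPm (n + 1))) (hPm (n + 2))
    · rw [natDegree_mul X_ne_zero (hPm (n + 1)).ne_zero, natDegree_X, hPd]; omega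
    · exact hPd (n + 2)
  obtain ⟨a, ha, hak⟩ := expand_coeff μ hmom 1 P hPm hPd hPo1 q (n + 1) hqd
  -- value of ⟨q, P k⟩
  have hqk : ∀ k, k ≤ n + 1 → ipw μ 1 q (P k) = ipw μ 1 (X * P k) (P (n + 1)) := by
    intro k hk
    rw [hq, ipw_sub_left μ hmom, hPo1 (n + 2) k (by omega), sub_zero]
    exact ipw_congr μ 1 _ _ _ _ (by ring)
  -- a k = 0 for k ≤ n - 1
  have hzero : ∀ k, k < n → a k = 0 := by
    intro k hk
    have h0 : ipw μ 1 q (P k) = 0 := by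
      rw [hqk k (by omega)]
      apply ipw_ortho_coeff μ hmom 1 P hPm hPd hPo1
      intro m hm
      apply coeff_eq_zero_of_natDegree_lt
      calc (X * P k).natDegree = k + 1 := by
            rw [natDegree_mul X_ne_zero (hPm k).ne_zero, natDegree_X, hPd]; omega
        _ < m := by omega
    have h1 := hak k (by omega)
    rw [h0, ipw_one_self] at h1
    exact (mul_eq_zero.mp h1).resolve_right (hNpos k).ne'
  -- a n = N(n+1)/N n
  have han : a n = nrmSq μ (P (n + 1)) / nrmSq μ (P n) := by
    have h1 : ipw μ 1 q (P n) = nrmSq μ (P (n + 1)) := by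
      rcases n with _ | m
      · rw [hqk 0 (by omega)]
        rw [ipw_monic μ hmom 1 P hPm hPd hPo1 (X * P 0) 1 (monic_X.mul (hPm 0))
          (by rw [natDegree_mul X_ne_zero (hPm 0).ne_zero, natDegree_X, hPd])]
        exact ipw_one_self μ (P 1)
      · rw [hqk (m + 1) (by omega)]
        rw [ipw_monic μ hmom 1 P hPm hPd hPo1 (X * P (m + 1)) (m + 2)
          (monic_X.mul (hPm (m + 1)))
          (by rw [natDegree_mul X_ne_zero (hPm (m + 1)).ne_zero, natDegree_X, hPd]; omega)]
        exact ipw_one_self μ (P (m + 2))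
    have h2 := hak n (by omega)
    rw [h1, ipw_one_self] at h2
    rw [eq_div_iff (hNpos n).ne']
    linarith
  refine ⟨a (n + 1), ?_⟩
  have hsum : q = C (a n) * P n + C (a (n + 1)) * P (n + 1) := by
    rw [ha, Finset.sum_range_succ, Finset.sum_range_succ]
    rw [Finset.sum_eq_zero (fun j hj => by
      rw [hzero j (Finset.mem_range.mp hj), map_zero, zero_mul])]
    ring
  have key : X * P (n + 1) - P (n + 2) = C (a n) * P n + C (a (n + 1)) * P (n + 1) := by
    rw [← hq]; exact hsum
  rw [han] at key
  linear_combination -key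

/-- Confluent Christoffel–Darboux: `W_n = -‖P_n‖² K_n(c,c)`. -/
lemma Wlem (μ : Measure ℝ)
    (hmom : ∀ n : ℕ, Integrable (fun x : ℝ => x ^ n) μ)
    (P : ℕ → Polynomial ℝ) (hPm : ∀ n, (P n).Monic) (hPd : ∀ n, (P n).natDegree = n)
    (hPo1 : ∀ m n, m ≠ n → ipw μ 1 (P m) (P n) = 0)
    (hNpos : ∀ n, 0 < nrmSq μ (P n)) (c : ℝ) : ∀ n : ℕ,
    (P (n + 1)).eval c * (derivative (P n)).eval c
      - (derivative (P (n + 1))).eval c * (P n).eval c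
    = -(nrmSq μ (P n) * Kcc μ P c n) := by
  intro n
  induction n with
  | zero =>
    have h0 : P 0 = 1 := (hPm 0).natDegree_eq_zero.mp (hPd 0)
    have h1 : P 1 = X + C ((P 1).coeff 0) := (hPm 1).eq_X_add_C (hPd 1)
    have hK : Kcc μ P c 0 = 1 / nrmSq μ (P 0) := by
      unfold Kcc
      rw [Finset.sum_range_one, h0]
      simp
    rw [hK, h0, h1]
    simp
    have hp := hNpos 0
    rw [h0] at hp
    exact (div_self hp.ne').symm
  | succ n ih =>
    obtain ⟨b, hb⟩ := threeTerm μ hmom P hPm hPd hPo1 hNpos n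
    have hK : Kcc μ P c (n + 1)
        = Kcc μ P c n + (P (n + 1)).eval c ^ 2 / nrmSq μ (P (n + 1)) := by
      unfold Kcc
      rw [Finset.sum_range_succ]
    have hval : (P (n + 2)).eval c = (c - b) * (P (n + 1)).eval c
        - (nrmSq μ (P (n + 1)) / nrmSq μ (P n)) * (P n).eval c := by
      rw [hb]
      simp only [eval_sub, eval_mul, eval_X, eval_C]
      try ring
    have hder : (derivative (P (n + 2))).eval c
        = (P (n + 1)).eval c + (c - b) * (derivative (P (n + 1))).eval c
          - (nrmSq μ (P (n + 1)) / nrmSq μ (P n)) * (derivative (P n)).eval c := by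
      rw [hb]
      simp only [derivative_sub, derivative_mul, derivative_X, derivative_C,
        eval_add, eval_sub, eval_mul, eval_X, eval_C, eval_one, eval_zero, one_mul, zero_mul,
        sub_zero, zero_sub, mul_zero]
      try ring
    have h0 := (hNpos n).ne'
    have h1 := (hNpos (n + 1)).ne'
    calc (P (n + 2)).eval c * (derivative (P (n + 1))).eval c
          - (derivative (P (n + 2))).eval c * (P (n + 1)).eval c
        = -((P (n + 1)).eval c ^ 2) + (nrmSq μ (P (n + 1)) / nrmSq μ (P n))
            * ((P (n + 1)).eval c * (derivative (P n)).eval c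
              - (derivative (P (n + 1))).eval c * (P n).eval c) := by
          rw [hval, hder]; ring
      _ = -((P (n + 1)).eval c ^ 2) + (nrmSq μ (P (n + 1)) / nrmSq μ (P n))
            * (-(nrmSq μ (P n) * Kcc μ P c n)) := by rw [ih]
      _ = -(nrmSq μ (P (n + 1)) * Kcc μ P c (n + 1)) := by
          rw [hK]
          field_simp
          ring

/-- Christoffel-type expansion `(x-c)² P2_n = P_{n+2} + a P_{n+1} + b P_n`. -/
lemma christoffel (μ : Measure ℝ)
    (hmom : ∀ n : ℕ, Integrable (fun x : ℝ => x ^ n) μ) (c : ℝ)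
    (P : ℕ → Polynomial ℝ) (hPm : ∀ n, (P n).Monic) (hPd : ∀ n, (P n).natDegree = n)
    (hPo1 : ∀ m n, m ≠ n → ipw μ 1 (P m) (P n) = 0)
    (P2 : ℕ → Polynomial ℝ) (hP2m : ∀ n, (P2 n).Monic) (hP2d : ∀ n, (P2 n).natDegree = n)
    (hP2o2 : ∀ m n, m ≠ n → ipw μ ((X - C c) ^ 2) (P2 m) (P2 n) = 0)
    (hNpos : ∀ n, 0 < nrmSq μ (P n)) (n : ℕ) :
    ∃ a b : ℝ, (X - C c) ^ 2 * P2 n = P (n + 2) + C a * P (n + 1) + C b * P n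
      ∧ b * nrmSq μ (P n) = nrmSq2 μ c (P2 n) := by
  set q : Polynomial ℝ := (X - C c) ^ 2 * P2 n - P (n + 2) with hq
  have h2m : ((X - C c) ^ 2 * P2 n).Monic := ((monic_X_sub_C c).pow 2).mul (hP2m n)
  have h2d : ((X - C c) ^ 2 * P2 n).natDegree = n + 2 := by
    rw [natDegree_mul (((monic_X_sub_C c).pow 2)).ne_zero (hP2m n).ne_zero,
      natDegree_pow, natDegree_X_sub_C, hP2d]
    omega
  have hqd : q.natDegree ≤ n + 1 :=
    monic_sub_natDegree_le _ _ (n + 1) h2m (hPm (n + 2)) h2d (hPd (n + 2))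
  obtain ⟨a, ha, hak⟩ := expand_coeff μ hmom 1 P hPm hPd hPo1 q (n + 1) hqd
  have hqk : ∀ k, k ≤ n + 1 → ipw μ 1 q (P k) = ipw μ ((X - C c) ^ 2) (P k) (P2 n) := by
    intro k hk
    rw [hq, ipw_sub_left μ hmom, hPo1 (n + 2) k (by omega), sub_zero]
    exact ipw_congr' μ 1 _ _ _ _ _ (by ring)
  have hzero : ∀ k, k < n → a k = 0 := by
    intro k hk
    have h0 : ipw μ 1 q (P k) = 0 := by
      rw [hqk k (by omega)]
      apply ipw_ortho_coeff μ hmom ((X - C c) ^ 2) P2 hP2m hP2d hP2o2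
      intro m hm
      exact coeff_eq_zero_of_natDegree_lt (by rw [hPd]; omega)
    have h1 := hak k (by omega)
    rw [h0, ipw_one_self] at h1
    exact (mul_eq_zero.mp h1).resolve_right (hNpos k).ne'
  have han : a n * nrmSq μ (P n) = nrmSq2 μ c (P2 n) := by
    have h1 := hak n (by omega)
    rw [ipw_one_self, hqk n (by omega),
      ipw_monic μ hmom ((X - C c) ^ 2) P2 hP2m hP2d hP2o2 (P n) n (hPm n) (hPd n),
      ipw_w2_self] at h1
    exact h1
  refine ⟨a (n + 1), a n, ?_, han⟩
  have hsum : q = C (a n) * P n + C (a (n + 1)) * P (n + 1) := by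
    rw [ha, Finset.sum_range_succ, Finset.sum_range_succ]
    rw [Finset.sum_eq_zero (fun j hj => by
      rw [hzero j (Finset.mem_range.mp hj), map_zero, zero_mul])]
    ring
  have key : (X - C c) ^ 2 * P2 n - P (n + 2)
      = C (a n) * P n + C (a (n + 1)) * P (n + 1) := by
    rw [← hq]; exact hsum
  linear_combination key


/-- for every `n ≥ 0`,
`e_n = ‖P_n^{[2]}‖_{[2]}²/‖P_n‖_μ² = (‖P_{n+1}‖_μ²/‖P_n‖_μ²)·(K_{n+1}(c,c)/K_n(c,c)) > 0`. -/
theorem stmt1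
    (μ : Measure ℝ) [IsFiniteMeasure μ]
    (hmom : ∀ n : ℕ, Integrable (fun x : ℝ => x ^ n) μ)
    (hpos : ∀ q : Polynomial ℝ, q ≠ 0 → 0 < ∫ x, q.eval x ^ 2 ∂μ)
    (c : ℝ) (hc : ∀ᵐ x ∂μ, c < x)
    (P : ℕ → Polynomial ℝ) (hPm : ∀ n, (P n).Monic) (hPd : ∀ n, (P n).natDegree = n)
    (hPo : ∀ m n, m ≠ n → ∫ x, (P m).eval x * (P n).eval x ∂μ = 0)
    (P2 : ℕ → Polynomial ℝ) (hP2m : ∀ n, (P2 n).Monic) (hP2d : ∀ n, (P2 n).natDegree = n)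
    (hP2o : ∀ m n, m ≠ n → ∫ x, (P2 m).eval x * (P2 n).eval x * (x - c) ^ 2 ∂μ = 0) :
    ∀ n : ℕ,
      eCoef P c n = nrmSq2 μ c (P2 n) / nrmSq μ (P n)
      ∧ eCoef P c n = (nrmSq μ (P (n + 1)) / nrmSq μ (P n)) * (Kcc μ P c (n + 1) / Kcc μ P c n)
      ∧ 0 < eCoef P c n := by
  -- bridges
  have hNpos : ∀ k, 0 < nrmSq μ (P k) := fun k => hpos (P k) (hPm k).ne_zero
  have hN2pos : ∀ k, 0 < nrmSq2 μ c (P2 k) := by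
    intro k
    have h := hpos ((X - C c) * P2 k) (mul_ne_zero (X_sub_C_ne_zero c) (hP2m k).ne_zero)
    have e : nrmSq2 μ c (P2 k) = ∫ x, ((X - C c) * P2 k).eval x ^ 2 ∂μ := by
      unfold nrmSq2
      apply integral_congr_ae
      filter_upwards with x
      simp only [eval_mul, eval_sub, eval_X, eval_C]
      ring
    rw [e]
    exact h
  have hPo1 : ∀ m k, m ≠ k → ipw μ 1 (P m) (P k) = 0 := by
    intro m k h
    have e : ipw μ 1 (P m) (P k) = ∫ x, (P m).eval x * (P k).eval x ∂μ := by
      unfold ipw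
      apply integral_congr_ae
      filter_upwards with x
      simp [eval_mul]
    rw [e]
    exact hPo m k h
  have hP2o2 : ∀ m k, m ≠ k → ipw μ ((X - C c) ^ 2) (P2 m) (P2 k) = 0 := by
    intro m k h
    have e : ipw μ ((X - C c) ^ 2) (P2 m) (P2 k)
        = ∫ x, (P2 m).eval x * (P2 k).eval x * (x - c) ^ 2 ∂μ := by
      unfold ipw
      apply integral_congr_ae
      filter_upwards with x
      simp [eval_mul, eval_pow]
    rw [e]
    exact hP2o m k h
  have hKpos : ∀ k, 0 < Kcc μ P c k := by
    intro k
    unfold Kcc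
    apply Finset.sum_pos'
    · intro j _
      exact div_nonneg (sq_nonneg _) (hNpos j).le
    · refine ⟨0, Finset.mem_range.mpr (by omega), ?_⟩
      have h0 : P 0 = 1 := (hPm 0).natDegree_eq_zero.mp (hPd 0)
      have hp := hNpos 0
      rw [h0] at hp ⊢
      simpa using div_pos one_pos hp
  have hW := Wlem μ hmom P hPm hPd hPo1 hNpos c
  have hWneg : ∀ k, (P (k + 1)).eval c * (derivative (P k)).eval c
      - (derivative (P (k + 1))).eval c * (P k).eval c < 0 := by
    intro k
    rw [hW k]
    have := mul_pos (hNpos k) (hKpos k)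
    linarith
  intro n
  obtain ⟨aa, bb, hCh, hbb⟩ :=
    christoffel μ hmom c P hPm hPd hPo1 P2 hP2m hP2d hP2o2 hNpos n
  have e1 : 0 = (P (n + 2)).eval c + aa * (P (n + 1)).eval c + bb * (P n).eval c := by
    have h := congrArg (fun p : Polynomial ℝ => p.eval c) hCh
    simpa [eval_mul, eval_pow, eval_add, eval_sub, eval_X, eval_C] using h
  have e2 : 0 = (derivative (P (n + 2))).eval c + aa * (derivative (P (n + 1))).eval c
      + bb * (derivative (P n)).eval c := by
    have h := congrArg (fun p : Polynomial ℝ => (derivative p).eval c) hCh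
    simpa [derivative_mul, derivative_pow, derivative_add, derivative_sub, derivative_X,
      derivative_C, eval_mul, eval_pow, eval_add, eval_sub, eval_X, eval_C] using h
  -- numerator identity: W_{n+1} = bb * W_n
  have hnum : (P (n + 2)).eval c * (derivative (P (n + 1))).eval c
      - (derivative (P (n + 2))).eval c * (P (n + 1)).eval c
      = bb * ((P (n + 1)).eval c * (derivative (P n)).eval c
        - (derivative (P (n + 1))).eval c * (P n).eval c) := by
    linear_combination (P (n + 1)).eval c * e2 - (derivative (P (n + 1))).eval c * e1
  have hden_ne : (P (n + 1)).eval c * (derivative (P n)).eval c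
      - (derivative (P (n + 1))).eval c * (P n).eval c ≠ 0 := (hWneg n).ne
  have hE : eCoef P c n = bb := by
    unfold eCoef
    rw [hnum]
    exact mul_div_cancel_right₀ bb hden_ne
  have hb2 : bb = nrmSq2 μ c (P2 n) / nrmSq μ (P n) := by
    rw [eq_div_iff (hNpos n).ne']
    exact hbb
  have hE2 : eCoef P c n
      = (nrmSq μ (P (n + 1)) / nrmSq μ (P n)) * (Kcc μ P c (n + 1) / Kcc μ P c n) := by
    unfold eCoef
    rw [hW (n + 1), hW n, neg_div_neg_eq, div_mul_div_comm]
  refine ⟨by rw [hE, hb2], hE2, ?_⟩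
  rw [hE2]
  exact mul_pos (div_pos (hNpos (n + 1)) (hNpos n)) (div_pos (hKpos (n + 1)) (hKpos n))
end

section
/- For every n ≥ 2: p_n(x) = ξ_{n,n} p_n^{[2]}(x) + ξ_{n−1,n} p_{n−1}^{[2]}(x) + ξ_{n−2,n} p_{n−2}^{[2]}(x), where ξ_{n,n} = r_n/r_n^{[2]} = (r_n/r_{n+1})·(K_{n+1}(c,c)/K_n(c,c))^{1/2} = e_n^{1/2}, ξ_{n−1,n} = −d_{n−1}·(K_{n−1}(c,c)/K_n(c,c))^{1/2}, and ξ_{n−2,n} = (r_{n−1}/r_n)·(K_{n−2}(c,c)/K_{n−1}(c,c))^{1/2}. -/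
/-! Everything is linear algebra for the functional `L q = ∫ q dμ`, positive definite on
polynomials, and its Christoffel transform `L₂ q = L ((X - c)² q)`, which is positive definite for
every real `c`. Expanding `(X - c)² P_m^{[2]}` in the basis `P_j`, `L`-orthogonality leaves only
`P_{m+2}, P_{m+1}, P_m`, and the double zero at `c` fixes the two lower coefficients by Cramer's
rule. Its determinant is the Wronskian `W(P_m, P_{m+1})(c) = ‖P_m‖² K_m(c,c) > 0` (confluent
Christoffel–Darboux, by induction along the three-term recurrence). Dually, `L₂`-orthogonality
leaves only three terms in the expansion of `P_{m+2}` in the basis `P_j^{[2]}`, and the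
Christoffel formula evaluates their coefficients. Finally
`‖P_n^{[2]}‖²_{[2]} = e_n ‖P_n‖² = ‖P_{n+1}‖² K_{n+1}(c,c) / K_n(c,c)` converts the monic
expansion into the orthonormal one. -/

open MeasureTheory Polynomial

theorem LinearMap.apply_C_mul (L : ℝ[X] →ₗ[ℝ] ℝ) (a : ℝ) (p : ℝ[X]) : L (C a * p) = a * L p := by
  rw [← smul_eq_C_mul, map_smul, smul_eq_mul]

theorem Polynomial.IsMonicOfDegree.X_sub_C_sq_mul {p : ℝ[X]} {m : ℕ} (hp : IsMonicOfDegree p m)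
    (c : ℝ) : IsMonicOfDegree ((X - C c) ^ 2 * p) (m + 2) := by
  simpa [add_comm] using ((isMonicOfDegree_X_sub_one c).pow 2).mul hp

theorem mem_span_image_Iic_of_natDegree_le {Q : ℕ → ℝ[X]} (hQ : ∀ n, IsMonicOfDegree (Q n) n)
    {k : ℕ} {q : ℝ[X]} (hq : q.natDegree ≤ k) : q ∈ Submodule.span ℝ (Q '' Set.Iic k) := by
  let S : Polynomial.Sequence ℝ :=
    ⟨Q, fun n => (degree_eq_iff_natDegree_eq (hQ n).ne_zero).mpr (hQ n).natDegree_eq⟩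
  have hspan : Submodule.span ℝ (S '' Set.Iic k) = degreeLE ℝ k :=
    S.span_degreeLE fun i _ => by simp [S, (hQ i).leadingCoeff_eq]
  rw [show Q '' Set.Iic k = S '' Set.Iic k from rfl, hspan, mem_degreeLE]
  exact degree_le_of_natDegree_le hq

theorem apply_mul_eq_zero_of_natDegree_le {Q : ℕ → ℝ[X]} (hQ : ∀ n, IsMonicOfDegree (Q n) n)
    (L : ℝ[X] →ₗ[ℝ] ℝ) {p q : ℝ[X]} {k : ℕ} (h : ∀ j ≤ k, L (p * Q j) = 0)
    (hq : q.natDegree ≤ k) : L (p * q) = 0 := by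
  have hker : Submodule.span ℝ (Q '' Set.Iic k) ≤ LinearMap.ker (L ∘ₗ LinearMap.mulLeft ℝ p) := by
    rw [Submodule.span_le]
    rintro _ ⟨j, hj, rfl⟩
    exact h j hj
  exact hker (mem_span_image_Iic_of_natDegree_le hQ hq)

def IsPositiveDefinite (L : ℝ[X] →ₗ[ℝ] ℝ) : Prop :=
  ∀ q : ℝ[X], q ≠ 0 → 0 < L (q * q)

structure IsMonicOrthogonal (L : ℝ[X] →ₗ[ℝ] ℝ) (Q : ℕ → ℝ[X]) : Prop where
  isMonicOfDegree : ∀ n, IsMonicOfDegree (Q n) n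
  orthogonal : ∀ m n, m ≠ n → L (Q m * Q n) = 0

noncomputable def orthCoeff (L : ℝ[X] →ₗ[ℝ] ℝ) (Q : ℕ → ℝ[X]) (j : ℕ) (q : ℝ[X]) : ℝ :=
  L (q * Q j) / L (Q j * Q j)

noncomputable def kernelDiag (L : ℝ[X] →ₗ[ℝ] ℝ) (Q : ℕ → ℝ[X]) (c : ℝ) (n : ℕ) : ℝ :=
  ∑ j ∈ Finset.range (n + 1), (Q j).eval c ^ 2 / L (Q j * Q j)

noncomputable def christoffelSq (L : ℝ[X] →ₗ[ℝ] ℝ) (c : ℝ) : ℝ[X] →ₗ[ℝ] ℝ :=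
  L ∘ₗ LinearMap.mulLeft ℝ ((X - C c) ^ 2)

@[simp]
theorem christoffelSq_apply (L : ℝ[X] →ₗ[ℝ] ℝ) (c : ℝ) (q : ℝ[X]) :
    christoffelSq L c q = L ((X - C c) ^ 2 * q) := rfl

theorem IsPositiveDefinite.christoffelSq {L : ℝ[X] →ₗ[ℝ] ℝ} (hL : IsPositiveDefinite L) (c : ℝ) :
    IsPositiveDefinite (christoffelSq L c) := fun q hq => by
  rw [christoffelSq_apply, show (X - C c) ^ 2 * (q * q) = ((X - C c) * q) * ((X - C c) * q) by ring]
  exact hL _ (mul_ne_zero (X_sub_C_ne_zero c) hq)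

theorem eCoef_eq_wronskian (P : ℕ → ℝ[X]) (c : ℝ) (n : ℕ) :
    eCoef P c n
      = (wronskian (P (n + 1)) (P (n + 2))).eval c / (wronskian (P n) (P (n + 1))).eval c := by
  simp only [eCoef, wronskian, eval_sub, eval_mul]
  rw [← neg_div_neg_eq]
  ring_nf

theorem eq_dCoef_eCoef_of_dvd {P : ℕ → ℝ[X]} {c a b : ℝ} {m : ℕ}
    (hW : (wronskian (P (m + 1)) (P m)).eval c ≠ 0)
    (hdvd : (X - C c) ^ 2 ∣ P (m + 2) + C a * P (m + 1) + C b * P m) :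
    a = -dCoef P c m ∧ b = eCoef P c m := by
  obtain ⟨R, hR⟩ := hdvd
  have h0 := congrArg (eval c) hR
  have h1 := congrArg (fun p => (derivative p).eval c) hR
  have hd : (derivative ((X - C c) ^ 2)).eval c = 0 := by simp [derivative_pow]
  simp only [eval_add, eval_mul, eval_C, eval_pow, eval_sub, eval_X, sub_self, ne_eq,
    OfNat.ofNat_ne_zero, not_false_eq_true, zero_pow, zero_mul, derivative_add, derivative_mul,
    derivative_C, zero_add, add_zero, hd] at h0 h1
  simp only [wronskian, eval_sub, eval_mul] at hW
  constructor
  · rw [dCoef, neg_div', eq_div_iff hW]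
    linear_combination (eval c (derivative (P m))) * h0 - (eval c (P m)) * h1
  · rw [eCoef, eq_div_iff hW]
    linear_combination (eval c (P (m + 1))) * h1 - (eval c (derivative (P (m + 1)))) * h0

namespace IsMonicOrthogonal

variable {L : ℝ[X] →ₗ[ℝ] ℝ} {Q Q₂ : ℕ → ℝ[X]} {c : ℝ}

theorem apply_mul_eq_zero_of_natDegree_lt (hQ : IsMonicOrthogonal L Q) {m : ℕ} {q : ℝ[X]}
    (hq : q.natDegree < m) : L (Q m * q) = 0 := by
  obtain ⟨k, rfl⟩ : ∃ k, m = k + 1 := ⟨m - 1, by omega⟩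
  exact apply_mul_eq_zero_of_natDegree_le hQ.isMonicOfDegree L
    (fun j hj => hQ.orthogonal _ _ (by omega)) (Nat.lt_succ_iff.mp hq)

theorem apply_mul_of_isMonicOfDegree (hQ : IsMonicOrthogonal L Q) {m : ℕ} {q : ℝ[X]}
    (hq : IsMonicOfDegree q m) : L (Q m * q) = L (Q m * Q m) := by
  rcases Nat.eq_zero_or_pos m with rfl | hm
  · rw [isMonicOfDegree_zero_iff.mp hq, isMonicOfDegree_zero_iff.mp (hQ.isMonicOfDegree 0)]
  · rw [← sub_eq_zero, ← map_sub, ← mul_sub]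
    exact hQ.apply_mul_eq_zero_of_natDegree_lt (hq.natDegree_sub_lt hm.ne' (hQ.isMonicOfDegree m))

theorem orthCoeff_eq_one (hL : IsPositiveDefinite L) (hQ : IsMonicOrthogonal L Q) {m : ℕ}
    {q : ℝ[X]} (hq : IsMonicOfDegree q m) : orthCoeff L Q m q = 1 := by
  rw [orthCoeff, mul_comm, hQ.apply_mul_of_isMonicOfDegree hq]
  exact div_self (hL _ (hQ.isMonicOfDegree m).ne_zero).ne'

theorem eq_zero_of_orthogonal (hL : IsPositiveDefinite L) (hQ : IsMonicOrthogonal L Q) {k : ℕ}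
    {q : ℝ[X]} (hq : q.natDegree ≤ k) (h : ∀ j ≤ k, L (q * Q j) = 0) : q = 0 := by
  by_contra hne
  exact (hL q hne).ne' (apply_mul_eq_zero_of_natDegree_le hQ.isMonicOfDegree L h hq)

theorem eq_sum_orthCoeff (hL : IsPositiveDefinite L) (hQ : IsMonicOrthogonal L Q) {k : ℕ}
    {q : ℝ[X]} (hq : q.natDegree ≤ k) :
    q = ∑ j ∈ Finset.range (k + 1), C (orthCoeff L Q j q) * Q j := by
  rw [← sub_eq_zero]
  refine hQ.eq_zero_of_orthogonal hL (k := k) ?_ fun j hj => ?_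
  · refine (natDegree_sub_le_of_le hq (natDegree_sum_le_of_forall_le _ _ fun i hi => ?_)).trans
      (max_self k).le
    exact (natDegree_C_mul_le _ _).trans
      ((hQ.isMonicOfDegree i).natDegree_eq.trans_le (Nat.lt_succ_iff.mp (Finset.mem_range.mp hi)))
  · have hsum : ∑ i ∈ Finset.range (k + 1), L (C (orthCoeff L Q i q) * Q i * Q j)
        = orthCoeff L Q j q * L (Q j * Q j) := by
      refine (Finset.sum_eq_single j (fun i _ hij => ?_) fun hj' => ?_).trans ?_
      · rw [mul_assoc, L.apply_C_mul, hQ.orthogonal i j hij, mul_zero]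
      · exact absurd (Finset.mem_range.mpr (Nat.lt_succ_of_le hj)) hj'
      · rw [mul_assoc, L.apply_C_mul]
    rw [sub_mul, Finset.sum_mul, map_sub, map_sum, hsum, orthCoeff,
      div_mul_cancel₀ _ (hL _ (hQ.isMonicOfDegree j).ne_zero).ne', sub_self]

theorem eq_three_term_of_orthogonal (hL : IsPositiveDefinite L) (hQ : IsMonicOrthogonal L Q)
    {m : ℕ} {q : ℝ[X]} (hq : q.natDegree ≤ m + 2) (h : ∀ j < m, L (q * Q j) = 0) :
    q = C (orthCoeff L Q (m + 2) q) * Q (m + 2) + C (orthCoeff L Q (m + 1) q) * Q (m + 1)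
      + C (orthCoeff L Q m q) * Q m := by
  have hlow : ∑ j ∈ Finset.range m, C (orthCoeff L Q j q) * Q j = 0 :=
    Finset.sum_eq_zero fun j hj => by
      rw [orthCoeff, h j (Finset.mem_range.mp hj), zero_div, C_0, zero_mul]
  conv_lhs => rw [hQ.eq_sum_orthCoeff hL hq]
  rw [Finset.sum_range_succ, Finset.sum_range_succ, Finset.sum_range_succ, hlow, zero_add]
  ring

theorem X_mul_eq_three_term (hL : IsPositiveDefinite L) (hQ : IsMonicOrthogonal L Q) (m : ℕ) :
    ∃ b : ℝ, X * Q (m + 1)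
      = Q (m + 2) + C b * Q (m + 1) + C (L (Q (m + 1) * Q (m + 1)) / L (Q m * Q m)) * Q m := by
  have hX : ∀ k, IsMonicOfDegree (X * Q k) (k + 1) := fun k => by
    simpa [add_comm] using (isMonicOfDegree_X ℝ).mul (hQ.isMonicOfDegree k)
  have hXQ : ∀ j, X * Q (m + 1) * Q j = Q (m + 1) * (X * Q j) := fun j => by ring
  have h := hQ.eq_three_term_of_orthogonal hL (hX (m + 1)).natDegree_eq.le fun j hj => by
    rw [hXQ]
    exact hQ.apply_mul_eq_zero_of_natDegree_lt ((hX j).natDegree_eq.trans_lt (by omega))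
  have hm : orthCoeff L Q m (X * Q (m + 1)) = L (Q (m + 1) * Q (m + 1)) / L (Q m * Q m) := by
    rw [orthCoeff, hXQ, hQ.apply_mul_of_isMonicOfDegree (hX m)]
  rw [hQ.orthCoeff_eq_one hL (hX (m + 1)), hm, C_1, one_mul] at h
  exact ⟨_, h⟩

theorem kernelDiag_pos (hL : IsPositiveDefinite L) (hQ : IsMonicOrthogonal L Q) (c : ℝ) (n : ℕ) :
    0 < kernelDiag L Q c n := by
  refine Finset.sum_pos' (fun j _ => div_nonneg (sq_nonneg _)
    (hL _ (hQ.isMonicOfDegree j).ne_zero).le) ⟨0, by simp, ?_⟩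
  rw [isMonicOfDegree_zero_iff.mp (hQ.isMonicOfDegree 0)]
  simpa using hL 1 one_ne_zero

theorem eval_wronskian_eq_mul_kernelDiag (hL : IsPositiveDefinite L) (hQ : IsMonicOrthogonal L Q)
    (c : ℝ) (m : ℕ) :
    (wronskian (Q m) (Q (m + 1))).eval c = L (Q m * Q m) * kernelDiag L Q c m := by
  induction m with
  | zero =>
    obtain ⟨a, ha⟩ := isMonicOfDegree_one_iff.mp (hQ.isMonicOfDegree 1)
    have h1 : L 1 ≠ 0 := by simpa using (hL 1 one_ne_zero).ne'
    simp [wronskian, kernelDiag, ha, isMonicOfDegree_zero_iff.mp (hQ.isMonicOfDegree 0), h1]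
  | succ m ih =>
    obtain ⟨b, hb⟩ := hQ.X_mul_eq_three_term hL m
    have hrec : Q (m + 2) = (X - C b) * Q (m + 1)
        - C (L (Q (m + 1) * Q (m + 1)) / L (Q m * Q m)) * Q m := by
      linear_combination -hb
    have hW : (wronskian (Q (m + 1)) (Q (m + 2))).eval c = (Q (m + 1)).eval c ^ 2
        + L (Q (m + 1) * Q (m + 1)) / L (Q m * Q m) * (wronskian (Q m) (Q (m + 1))).eval c := by
      rw [hrec]
      simp only [wronskian, derivative_sub, derivative_mul, derivative_X, derivative_C,
        eval_add, eval_sub, eval_mul, eval_X, eval_C, eval_zero, eval_one]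
      ring
    rw [hW, ih, kernelDiag, kernelDiag, Finset.sum_range_succ _ (m + 1)]
    field_simp [(hL _ (hQ.isMonicOfDegree m).ne_zero).ne',
      (hL _ (hQ.isMonicOfDegree (m + 1)).ne_zero).ne']
    ring

theorem eCoef_eq_kernelDiag (hL : IsPositiveDefinite L) (hQ : IsMonicOrthogonal L Q) (c : ℝ)
    (n : ℕ) : eCoef Q c n = L (Q (n + 1) * Q (n + 1)) * kernelDiag L Q c (n + 1)
      / (L (Q n * Q n) * kernelDiag L Q c n) := by
  rw [eCoef_eq_wronskian, hQ.eval_wronskian_eq_mul_kernelDiag hL,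
    hQ.eval_wronskian_eq_mul_kernelDiag hL]

theorem X_sub_C_sq_mul_eq (hL : IsPositiveDefinite L) (hQ : IsMonicOrthogonal L Q)
    (hQ₂ : IsMonicOrthogonal (christoffelSq L c) Q₂) (m : ℕ) :
    (X - C c) ^ 2 * Q₂ m = Q (m + 2) - C (dCoef Q c m) * Q (m + 1) + C (eCoef Q c m) * Q m := by
  have hq := (hQ₂.isMonicOfDegree m).X_sub_C_sq_mul c
  have h := hQ.eq_three_term_of_orthogonal hL hq.natDegree_eq.le fun j hj => by
    rw [mul_assoc, ← christoffelSq_apply]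
    exact hQ₂.apply_mul_eq_zero_of_natDegree_lt ((hQ.isMonicOfDegree j).natDegree_eq.trans_lt hj)
  rw [hQ.orthCoeff_eq_one hL hq, C_1, one_mul] at h
  have hW : (wronskian (Q (m + 1)) (Q m)).eval c ≠ 0 := by
    rw [← wronskian_neg_eq, eval_neg, neg_ne_zero, hQ.eval_wronskian_eq_mul_kernelDiag hL]
    exact (mul_pos (hL _ (hQ.isMonicOfDegree m).ne_zero) (hQ.kernelDiag_pos hL c m)).ne'
  obtain ⟨hd, he⟩ := eq_dCoef_eCoef_of_dvd hW ⟨Q₂ m, h.symm⟩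
  rw [h, hd, he, C_neg, neg_mul, ← sub_eq_add_neg]

theorem apply_mul_X_sub_C_sq_mul (hL : IsPositiveDefinite L) (hQ : IsMonicOrthogonal L Q)
    (hQ₂ : IsMonicOrthogonal (christoffelSq L c) Q₂) (p : ℝ[X]) (n : ℕ) :
    L (p * ((X - C c) ^ 2 * Q₂ n))
      = L (p * Q (n + 2)) - dCoef Q c n * L (p * Q (n + 1)) + eCoef Q c n * L (p * Q n) := by
  rw [hQ.X_sub_C_sq_mul_eq hL hQ₂, mul_add, mul_sub, mul_left_comm _ (C _), mul_left_comm _ (C _),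
    map_add, map_sub, L.apply_C_mul, L.apply_C_mul]

theorem christoffelSq_mul_self_eq_eCoef_mul (hL : IsPositiveDefinite L)
    (hQ : IsMonicOrthogonal L Q) (hQ₂ : IsMonicOrthogonal (christoffelSq L c) Q₂) (n : ℕ) :
    christoffelSq L c (Q₂ n * Q₂ n) = eCoef Q c n * L (Q n * Q n) := by
  calc christoffelSq L c (Q₂ n * Q₂ n) = christoffelSq L c (Q₂ n * Q n) :=
        (hQ₂.apply_mul_of_isMonicOfDegree (hQ.isMonicOfDegree n)).symm
    _ = L (Q n * ((X - C c) ^ 2 * Q₂ n)) := by rw [christoffelSq_apply]; ring_nf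
    _ = eCoef Q c n * L (Q n * Q n) := by
        rw [hQ.apply_mul_X_sub_C_sq_mul hL hQ₂, hQ.orthogonal n (n + 2) (by omega),
          hQ.orthogonal n (n + 1) (by omega)]
        ring

theorem eq_christoffelSq_expansion (hL : IsPositiveDefinite L) (hQ : IsMonicOrthogonal L Q)
    (hQ₂ : IsMonicOrthogonal (christoffelSq L c) Q₂) (m : ℕ) :
    Q (m + 2) = Q₂ (m + 2)
      + C (-dCoef Q c (m + 1) * L (Q (m + 2) * Q (m + 2))
          / christoffelSq L c (Q₂ (m + 1) * Q₂ (m + 1))) * Q₂ (m + 1)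
      + C (L (Q (m + 2) * Q (m + 2)) / christoffelSq L c (Q₂ m * Q₂ m)) * Q₂ m := by
  have hpair : ∀ j, christoffelSq L c (Q (m + 2) * Q₂ j)
      = L (Q (m + 2) * ((X - C c) ^ 2 * Q₂ j)) := fun j => by rw [christoffelSq_apply]; ring_nf
  have h := hQ₂.eq_three_term_of_orthogonal (hL.christoffelSq c)
    (hQ.isMonicOfDegree (m + 2)).natDegree_eq.le fun j hj => by
      rw [hpair]
      exact hQ.apply_mul_eq_zero_of_natDegree_lt
        (((hQ₂.isMonicOfDegree j).X_sub_C_sq_mul c).natDegree_eq.trans_lt (by omega))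
  have h1 : christoffelSq L c (Q (m + 2) * Q₂ (m + 1))
      = -dCoef Q c (m + 1) * L (Q (m + 2) * Q (m + 2)) := by
    rw [hpair, hQ.apply_mul_X_sub_C_sq_mul hL hQ₂, hQ.orthogonal (m + 2) (m + 3) (by omega),
      hQ.orthogonal (m + 2) (m + 1) (by omega)]
    ring
  have h0 : christoffelSq L c (Q (m + 2) * Q₂ m) = L (Q (m + 2) * Q (m + 2)) := by
    rw [hpair, hQ.apply_mul_of_isMonicOfDegree ((hQ₂.isMonicOfDegree m).X_sub_C_sq_mul c)]
  rw [hQ₂.orthCoeff_eq_one (hL.christoffelSq c) (hQ.isMonicOfDegree (m + 2)),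
    orthCoeff, orthCoeff, h1, h0, C_1, one_mul] at h
  exact h

end IsMonicOrthogonal

section Measure

variable {μ : Measure ℝ}

theorem integrable_eval (hmom : ∀ n : ℕ, Integrable (fun x : ℝ => x ^ n) μ) (q : ℝ[X]) :
    Integrable (fun x => q.eval x) μ := by
  simp_rw [eval_eq_sum_range]
  exact integrable_finsetSum _ fun i _ => (hmom i).const_mul _

noncomputable def momentFunctional (μ : Measure ℝ)
    (hmom : ∀ n : ℕ, Integrable (fun x : ℝ => x ^ n) μ) : ℝ[X] →ₗ[ℝ] ℝ where
  toFun q := ∫ x, q.eval x ∂μ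
  map_add' p q := by
    simp only [eval_add]
    exact integral_add (integrable_eval hmom p) (integrable_eval hmom q)
  map_smul' a q := by
    simp only [eval_smul, smul_eq_mul, RingHom.id_apply]
    exact integral_const_mul a _

variable (hmom : ∀ n : ℕ, Integrable (fun x : ℝ => x ^ n) μ)

@[simp]
theorem momentFunctional_apply (q : ℝ[X]) : momentFunctional μ hmom q = ∫ x, q.eval x ∂μ := rfl

theorem isPositiveDefinite_momentFunctional
    (hpos : ∀ q : ℝ[X], q ≠ 0 → 0 < ∫ x, q.eval x ^ 2 ∂μ) :
    IsPositiveDefinite (momentFunctional μ hmom) := fun q hq => by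
  simpa [sq] using hpos q hq

theorem christoffelSq_momentFunctional_apply (c : ℝ) (q : ℝ[X]) :
    christoffelSq (momentFunctional μ hmom) c q = ∫ x, q.eval x * (x - c) ^ 2 ∂μ := by
  simp only [christoffelSq_apply, momentFunctional_apply, eval_mul, eval_pow, eval_sub, eval_X,
    eval_C, mul_comm]

theorem nrmSq_eq_momentFunctional (q : ℝ[X]) : nrmSq μ q = momentFunctional μ hmom (q * q) := by
  simp [nrmSq, sq]

theorem nrmSq2_eq_christoffelSq (c : ℝ) (q : ℝ[X]) :
    nrmSq2 μ c q = christoffelSq (momentFunctional μ hmom) c (q * q) := by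
  simp only [nrmSq2, christoffelSq_momentFunctional_apply, eval_mul, sq]

theorem Kcc_eq_kernelDiag (P : ℕ → ℝ[X]) (c : ℝ) (n : ℕ) :
    Kcc μ P c n = kernelDiag (momentFunctional μ hmom) P c n := by
  simp only [Kcc, kernelDiag, nrmSq_eq_momentFunctional hmom]

theorem isMonicOrthogonal_momentFunctional {P : ℕ → ℝ[X]} (hPm : ∀ n, (P n).Monic)
    (hPd : ∀ n, (P n).natDegree = n)
    (hPo : ∀ m n, m ≠ n → ∫ x, (P m).eval x * (P n).eval x ∂μ = 0) :
    IsMonicOrthogonal (momentFunctional μ hmom) P :=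
  ⟨fun n => ⟨hPd n, hPm n⟩, fun m n h => by simpa using hPo m n h⟩

theorem isMonicOrthogonal_christoffelSq {c : ℝ} {P2 : ℕ → ℝ[X]} (hP2m : ∀ n, (P2 n).Monic)
    (hP2d : ∀ n, (P2 n).natDegree = n)
    (hP2o : ∀ m n, m ≠ n → ∫ x, (P2 m).eval x * (P2 n).eval x * (x - c) ^ 2 ∂μ = 0) :
    IsMonicOrthogonal (christoffelSq (momentFunctional μ hmom) c) P2 :=
  ⟨fun n => ⟨hP2d n, hP2m n⟩, fun m n h => by
    simpa only [christoffelSq_momentFunctional_apply, eval_mul] using hP2o m n h⟩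

end Measure

section Normalization

variable {μ : Measure ℝ} {c : ℝ}

theorem nrmSq_nonneg (q : ℝ[X]) : 0 ≤ nrmSq μ q := integral_nonneg fun _ => sq_nonneg _

theorem nrmSq2_nonneg (q : ℝ[X]) : 0 ≤ nrmSq2 μ c q := integral_nonneg fun _ => by positivity

theorem nrmSq_eq_one_div_rC_sq (P : ℕ → ℝ[X]) (n : ℕ) : nrmSq μ (P n) = 1 / rC μ P n ^ 2 := by
  rw [rC, div_pow, one_pow, Real.sq_sqrt (nrmSq_nonneg _), one_div_one_div]

theorem nrmSq2_eq_one_div_r2C_sq (P2 : ℕ → ℝ[X]) (n : ℕ) :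
    nrmSq2 μ c (P2 n) = 1 / r2C μ c P2 n ^ 2 := by
  rw [r2C, div_pow, one_pow, Real.sq_sqrt (nrmSq2_nonneg _), one_div_one_div]

variable {hmom : ∀ n : ℕ, Integrable (fun x : ℝ => x ^ n) μ} {P P2 : ℕ → ℝ[X]}

theorem r2C_eq_rC_mul_sqrt (hL : IsPositiveDefinite (momentFunctional μ hmom))
    (hP : IsMonicOrthogonal (momentFunctional μ hmom) P)
    (hP2 : IsMonicOrthogonal (christoffelSq (momentFunctional μ hmom) c) P2) (n : ℕ) :
    r2C μ c P2 n = rC μ P (n + 1) * √(Kcc μ P c n / Kcc μ P c (n + 1)) := by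
  have hK := hP.kernelDiag_pos hL c
  have hN := fun k => hL _ (hP.isMonicOfDegree k).ne_zero
  have hM : nrmSq2 μ c (P2 n)
      = nrmSq μ (P (n + 1)) * (Kcc μ P c n / Kcc μ P c (n + 1))⁻¹ := by
    rw [nrmSq2_eq_christoffelSq hmom, hP.christoffelSq_mul_self_eq_eCoef_mul hL hP2,
      hP.eCoef_eq_kernelDiag hL, nrmSq_eq_momentFunctional hmom, Kcc_eq_kernelDiag hmom,
      Kcc_eq_kernelDiag hmom]
    field_simp [(hK n).ne', (hK (n + 1)).ne']
    exact mul_div_cancel_right₀ _ (hN n).ne'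
  rw [r2C, rC, hM, nrmSq_eq_momentFunctional hmom, Real.sqrt_mul (hN _).le, Real.sqrt_inv]
  field_simp

theorem r2C_pos (hL : IsPositiveDefinite (momentFunctional μ hmom))
    (hP2 : IsMonicOrthogonal (christoffelSq (momentFunctional μ hmom) c) P2) (n : ℕ) :
    0 < r2C μ c P2 n := by
  rw [r2C, nrmSq2_eq_christoffelSq hmom]
  exact one_div_pos.mpr (Real.sqrt_pos.mpr (hL.christoffelSq c _ (hP2.isMonicOfDegree n).ne_zero))

theorem rC_div_r2C_eq_sqrt_eCoef (hL : IsPositiveDefinite (momentFunctional μ hmom))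
    (hP : IsMonicOrthogonal (momentFunctional μ hmom) P)
    (hP2 : IsMonicOrthogonal (christoffelSq (momentFunctional μ hmom) c) P2) (n : ℕ) :
    rC μ P n / r2C μ c P2 n = √(eCoef P c n) := by
  have he : eCoef P c n = nrmSq2 μ c (P2 n) / nrmSq μ (P n) := by
    rw [nrmSq2_eq_christoffelSq hmom, hP.christoffelSq_mul_self_eq_eCoef_mul hL hP2,
      nrmSq_eq_momentFunctional hmom,
      mul_div_cancel_right₀ _ (hL _ (hP.isMonicOfDegree n).ne_zero).ne']
  rw [rC, r2C, he, Real.sqrt_div' _ (nrmSq_nonneg _)]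
  field_simp

end Normalization

theorem stmt7_general
    (μ : Measure ℝ)
    (hmom : ∀ n : ℕ, Integrable (fun x : ℝ => x ^ n) μ)
    (hpos : ∀ q : Polynomial ℝ, q ≠ 0 → 0 < ∫ x, q.eval x ^ 2 ∂μ)
    (c : ℝ)
    (P : ℕ → Polynomial ℝ) (hPm : ∀ n, (P n).Monic) (hPd : ∀ n, (P n).natDegree = n)
    (hPo : ∀ m n, m ≠ n → ∫ x, (P m).eval x * (P n).eval x ∂μ = 0)
    (P2 : ℕ → Polynomial ℝ) (hP2m : ∀ n, (P2 n).Monic) (hP2d : ∀ n, (P2 n).natDegree = n)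
    (hP2o : ∀ m n, m ≠ n → ∫ x, (P2 m).eval x * (P2 n).eval x * (x - c) ^ 2 ∂μ = 0) :
    ∀ n : ℕ, 2 ≤ n →
      onP μ P n
        = C (rC μ P n / r2C μ c P2 n) * onP2 μ c P2 n
          + C (-(dCoef P c (n - 1)) * Real.sqrt (Kcc μ P c (n - 1) / Kcc μ P c n))
              * onP2 μ c P2 (n - 1)
          + C ((rC μ P (n - 1) / rC μ P n)
                * Real.sqrt (Kcc μ P c (n - 2) / Kcc μ P c (n - 1)))
              * onP2 μ c P2 (n - 2)
      ∧ rC μ P n / r2C μ c P2 n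
          = (rC μ P n / rC μ P (n + 1)) * Real.sqrt (Kcc μ P c (n + 1) / Kcc μ P c n)
      ∧ rC μ P n / r2C μ c P2 n = Real.sqrt (eCoef P c n) := by
  intro n hn
  obtain ⟨m, rfl⟩ : ∃ m, n = m + 2 := ⟨n - 2, by omega⟩
  simp only [show m + 2 - 1 = m + 1 from rfl, show m + 2 - 2 = m from rfl]
  have hL := isPositiveDefinite_momentFunctional hmom hpos
  have hP := isMonicOrthogonal_momentFunctional hmom hPm hPd hPo
  have hP2 := isMonicOrthogonal_christoffelSq hmom hP2m hP2d hP2o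
  have hr2 := r2C_eq_rC_mul_sqrt hL hP hP2
  refine ⟨?_, ?_, rC_div_r2C_eq_sqrt_eCoef hL hP hP2 _⟩
  · have hexp := hP.eq_christoffelSq_expansion hL hP2 m
    simp only [← nrmSq_eq_momentFunctional, ← nrmSq2_eq_christoffelSq] at hexp
    have e2 : rC μ P (m + 2) / r2C μ c P2 (m + 2) * r2C μ c P2 (m + 2) = rC μ P (m + 2) :=
      div_mul_cancel₀ _ (r2C_pos hL hP2 _).ne'
    have e1 : rC μ P (m + 2) * (-dCoef P c (m + 1) * nrmSq μ (P (m + 2)) / nrmSq2 μ c (P2 (m + 1)))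
        = -dCoef P c (m + 1) * √(Kcc μ P c (m + 1) / Kcc μ P c (m + 2)) * r2C μ c P2 (m + 1) := by
      rw [nrmSq_eq_one_div_rC_sq, nrmSq2_eq_one_div_r2C_sq, hr2]
      field_simp
    have e0 : rC μ P (m + 2) * (nrmSq μ (P (m + 2)) / nrmSq2 μ c (P2 m))
        = rC μ P (m + 1) / rC μ P (m + 2) * √(Kcc μ P c m / Kcc μ P c (m + 1)) * r2C μ c P2 m := by
      rw [nrmSq_eq_one_div_rC_sq, nrmSq2_eq_one_div_r2C_sq, hr2]
      field_simp
    rw [onP, onP2, onP2, onP2, hexp]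
    simp only [mul_add, ← mul_assoc, ← C_mul, e0, e1, e2]
  · rw [hr2, ← inv_div (Kcc μ P c (m + 2)), Real.sqrt_inv, div_mul_eq_div_div]
    exact div_eq_mul_inv _ _

/-- for every `n ≥ 2`,
`p_n = ξ_{n,n} p_n^{[2]} + ξ_{n-1,n} p_{n-1}^{[2]} + ξ_{n-2,n} p_{n-2}^{[2]}`, with
`ξ_{n,n} = r_n/r_n^{[2]} = (r_n/r_{n+1})·(K_{n+1}(c,c)/K_n(c,c))^{1/2} = e_n^{1/2}`,
`ξ_{n-1,n} = -d_{n-1}·(K_{n-1}(c,c)/K_n(c,c))^{1/2}`, and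
`ξ_{n-2,n} = (r_{n-1}/r_n)·(K_{n-2}(c,c)/K_{n-1}(c,c))^{1/2}`. -/
theorem stmt7
    (μ : Measure ℝ) [IsFiniteMeasure μ]
    (hmom : ∀ n : ℕ, Integrable (fun x : ℝ => x ^ n) μ)
    (hpos : ∀ q : Polynomial ℝ, q ≠ 0 → 0 < ∫ x, q.eval x ^ 2 ∂μ)
    (c : ℝ) (hc : ∀ᵐ x ∂μ, c < x)
    (P : ℕ → Polynomial ℝ) (hPm : ∀ n, (P n).Monic) (hPd : ∀ n, (P n).natDegree = n)
    (hPo : ∀ m n, m ≠ n → ∫ x, (P m).eval x * (P n).eval x ∂μ = 0)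
    (P2 : ℕ → Polynomial ℝ) (hP2m : ∀ n, (P2 n).Monic) (hP2d : ∀ n, (P2 n).natDegree = n)
    (hP2o : ∀ m n, m ≠ n → ∫ x, (P2 m).eval x * (P2 n).eval x * (x - c) ^ 2 ∂μ = 0) :
    ∀ n : ℕ, 2 ≤ n →
      onP μ P n
        = C (rC μ P n / r2C μ c P2 n) * onP2 μ c P2 n
          + C (-(dCoef P c (n - 1)) * Real.sqrt (Kcc μ P c (n - 1) / Kcc μ P c n))
              * onP2 μ c P2 (n - 1)
          + C ((rC μ P (n - 1) / rC μ P n)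
                * Real.sqrt (Kcc μ P c (n - 2) / Kcc μ P c (n - 1)))
              * onP2 μ c P2 (n - 2)
      ∧ rC μ P n / r2C μ c P2 n
          = (rC μ P n / rC μ P (n + 1)) * Real.sqrt (Kcc μ P c (n + 1) / Kcc μ P c n)
      ∧ rC μ P n / r2C μ c P2 n = Real.sqrt (eCoef P c n) :=
  stmt7_general μ hmom hpos c P hPm hPd hPo P2 hP2m hP2d hP2o
end
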